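/- Let S be a distributive inverse semigroup, F a filter in S, and P a ∨-closed order ideal maximal among ∨-closed order ideals disjoint from F. Then P is a prime order ideal: a↓ ∩ b↓ ⊆ P implies a ∈ P or b ∈ P. -/
import Mathlib


namespace InvPaper

/-- An inverse semigroup: a regular semigroup whose idempotents commute
(equivalently, each element has a unique generalized inverse `sinv`). -/
class InverseSemigroup (S : Type*) extends Semigroup S where
  sinv : S → S
  mul_sinv_mul : ∀ a : S, a * sinv a * a = a
  sinv_mul_sinv : ∀ a : S, sinv a * a * sinv a = sinv a
  idem_comm : ∀ e f : S, e * e = e → f * f = f → e * f = f * e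

open InverseSemigroup

variable {S : Type*}

section Basic
variable [InverseSemigroup S]

/-- `e` is an idempotent. -/
def idem (e : S) : Prop := e * e = e

/-- The natural partial order: `a ≤ b` iff `a = b * e` for some idempotent `e`. -/
def nle (a b : S) : Prop := ∃ e : S, idem e ∧ a = b * e

/-- `s` and `t` are compatible: `s⁻¹t` and `st⁻¹` are idempotents. -/
def compatible (s t : S) : Prop := idem (sinv s * t) ∧ idem (s * sinv t)

/-- `j` is the join (least upper bound) of `a` and `b` w.r.t. the natural partial order. -/
def isJoin (a b j : S) : Prop :=
  nle a j ∧ nle b j ∧ ∀ c : S, nle a c → nle b c → nle j c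

/-- `m` is the meet (greatest lower bound) of `a` and `b`. -/
def isMeet (a b m : S) : Prop :=
  nle m a ∧ nle m b ∧ ∀ z : S, nle z a → nle z b → nle z m

/-- `j` is the least upper bound of the set `A`. -/
def isJoinSet (A : Set S) (j : S) : Prop :=
  (∀ a ∈ A, nle a j) ∧ ∀ c : S, (∀ a ∈ A, nle a c) → nle j c

/-- A filter: a nonempty, downward-directed, upward-closed subset. -/
def IsFilter (F : Set S) : Prop :=
  F.Nonempty ∧ (∀ a ∈ F, ∀ b ∈ F, ∃ c ∈ F, nle c a ∧ nle c b) ∧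
    ∀ a ∈ F, ∀ b : S, nle a b → b ∈ F

/-- An order ideal: a downward-closed subset. -/
def IsOrderIdeal (A : Set S) : Prop := ∀ x ∈ A, ∀ y : S, nle y x → y ∈ A

end Basic

/-- An inverse semigroup with a (multiplicative) zero element. -/
class InverseSemigroupWithZero (S : Type*) extends InverseSemigroup S, Zero S where
  zmul : ∀ a : S, 0 * a = 0
  mulz : ∀ a : S, a * 0 = 0

section WithZero
variable [InverseSemigroupWithZero S]

/-- A proper filter: a filter not containing `0`. -/
def IsProperFilter (F : Set S) : Prop := IsFilter F ∧ (0 : S) ∉ F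

/-- An ultrafilter: a maximal proper filter. -/
def IsUltrafilter (F : Set S) : Prop :=
  IsProperFilter F ∧ ∀ G : Set S, IsProperFilter G → F ⊆ G → G = F

/-- A prime filter: a proper filter `F` such that whenever a join `a ∨ b` exists and
lies in `F`, then `a ∈ F` or `b ∈ F`. -/
def IsPrimeFilter (F : Set S) : Prop :=
  IsProperFilter F ∧ ∀ a b j : S, isJoin a b j → j ∈ F → a ∈ F ∨ b ∈ F

/-- `d(F) = (F⁻¹F)↑`, the upward closure of `{a⁻¹b : a, b ∈ F}`. -/
def dClosure (F : Set S) : Set S :=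
  {x | ∃ a ∈ F, ∃ b ∈ F, nle (InverseSemigroup.sinv a * b) x}

/-- `r(F) = (FF⁻¹)↑`, the upward closure of `{ab⁻¹ : a, b ∈ F}`. -/
def rClosure (F : Set S) : Set S :=
  {x | ∃ a ∈ F, ∃ b ∈ F, nle (a * InverseSemigroup.sinv b) x}

/-- The product of two filters: `F · G = (FG)↑`. -/
def filterMul (F G : Set S) : Set S :=
  {x | ∃ a ∈ F, ∃ b ∈ G, nle (a * b) x}

/-- `A` is ∨-closed: closed under existing joins of finite nonempty compatible subsets. -/
def IsVeeClosed (A : Set S) : Prop :=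
  ∀ Y : Finset S, Y.Nonempty → ↑Y ⊆ A → (∀ a ∈ Y, ∀ b ∈ Y, compatible a b) →
    ∀ j : S, isJoinSet (↑Y : Set S) j → j ∈ A

/-- The ∨-closure `A^∨`: all existing joins of finite nonempty compatible subsets of `A`. -/
def veeClosure (A : Set S) : Set S :=
  {x | ∃ Y : Finset S, Y.Nonempty ∧ ↑Y ⊆ A ∧ (∀ a ∈ Y, ∀ b ∈ Y, compatible a b) ∧
    isJoinSet (↑Y : Set S) x}

/-- A prime order ideal: if every common lower bound of `a` and `b` lies in `P`,
then `a ∈ P` or `b ∈ P`. -/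
def IsPrimeOrderIdeal (P : Set S) : Prop :=
  ∀ a b : S, (∀ z : S, nle z a → nle z b → z ∈ P) → a ∈ P ∨ b ∈ P

/-- The set of prime filters containing `s`. -/
def Xset (s : S) : Set (Set S) := {F | IsPrimeFilter F ∧ s ∈ F}

end WithZero

/-- A distributive inverse semigroup: compatible pairs have joins and
multiplication distributes over these joins. -/
class DistributiveInverseSemigroup (S : Type*) extends InverseSemigroupWithZero S where
  joins_exist : ∀ a b : S, compatible a b → ∃ j : S, isJoin a b j
  mul_distrib_left : ∀ a b j c : S, compatible a b → isJoin a b j →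
    isJoin (c * a) (c * b) (c * j)
  mul_distrib_right : ∀ a b j c : S, compatible a b → isJoin a b j →
    isJoin (a * c) (b * c) (j * c)

/-- A distributive inverse semigroup is Boolean if its idempotents form a generalized
Boolean algebra: relative complements of idempotents exist. -/
def IsBoolean (S : Type*) [DistributiveInverseSemigroup S] : Prop :=
  ∀ e f : S, idem e → idem f → nle e f →
    ∃ g : S, idem g ∧ e * g = 0 ∧ isJoin e g f

/-- A pseudogroup: an inverse semigroup with joins of all nonempty compatible subsets,
over which multiplication distributes. -/
class Pseudogroup (S : Type*) extends InverseSemigroup S where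
  joins_exist : ∀ A : Set S, A.Nonempty → (∀ a ∈ A, ∀ b ∈ A, compatible a b) →
    ∃ j : S, isJoinSet A j
  mul_distrib_left : ∀ (A : Set S) (j c : S), isJoinSet A j →
    isJoinSet ((c * ·) '' A) (c * j)
  mul_distrib_right : ∀ (A : Set S) (j c : S), isJoinSet A j →
    isJoinSet ((· * c) '' A) (j * c)


section Aux
variable [InverseSemigroup S]

lemma idem_mul {e f : S} (he : idem e) (hf : idem f) : idem (e * f) := by
  unfold idem at *
  calc e * f * (e * f) = e * (f * e) * f := by simp [mul_assoc]
    _ = e * (e * f) * f := by rw [InverseSemigroup.idem_comm e f he hf]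
    _ = (e * e) * (f * f) := by simp [mul_assoc]
    _ = e * f := by rw [he, hf]

lemma idem_sinv_mul (a : S) : idem (sinv a * a) := by
  unfold idem
  calc sinv a * a * (sinv a * a) = (sinv a * a * sinv a) * a := by simp [mul_assoc]
    _ = sinv a * a := by rw [InverseSemigroup.sinv_mul_sinv]

lemma idem_mul_sinv (a : S) : idem (a * sinv a) := by
  unfold idem
  calc a * sinv a * (a * sinv a) = (a * sinv a * a) * sinv a := by simp [mul_assoc]
    _ = a * sinv a := by rw [InverseSemigroup.mul_sinv_mul]

lemma nle_refl (a : S) : nle a a :=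
  ⟨sinv a * a, idem_sinv_mul a, by rw [← mul_assoc, InverseSemigroup.mul_sinv_mul]⟩

lemma nle_trans {a b c : S} (h1 : nle a b) (h2 : nle b c) : nle a c := by
  obtain ⟨e, he, rfl⟩ := h1
  obtain ⟨f, hf, rfl⟩ := h2
  exact ⟨f * e, idem_mul hf he, by rw [mul_assoc]⟩

lemma nle_antisymm {a b : S} (h1 : nle a b) (h2 : nle b a) : a = b := by
  obtain ⟨e, he, h1⟩ := h1
  obtain ⟨f, hf, h2⟩ := h2
  have h3 : a = a * (f * e) := by rw [← mul_assoc, ← h2, ← h1]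
  have h4 : a * f = a := by
    calc a * f = a * (f * e) * f := by rw [← h3]
      _ = a * (f * (e * f)) := by simp [mul_assoc]
      _ = a * (f * (f * e)) := by rw [InverseSemigroup.idem_comm e f he hf]
      _ = a * ((f * f) * e) := by simp [mul_assoc]
      _ = a * (f * e) := by rw [hf]
      _ = a := h3.symm
  rw [h2, h4]

lemma idem_conj {e : S} (he : idem e) (c : S) : idem (c * e * sinv c) := by
  unfold idem at *
  calc c * e * sinv c * (c * e * sinv c)
      = c * (e * (sinv c * c) * e) * sinv c := by simp [mul_assoc]
    _ = c * ((sinv c * c) * (e * e)) * sinv c := by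
        rw [InverseSemigroup.idem_comm e (sinv c * c) he (idem_sinv_mul c)]; simp [mul_assoc]
    _ = c * (sinv c * c) * (e * sinv c) := by rw [he]; simp [mul_assoc]
    _ = (c * sinv c * c) * (e * sinv c) := by simp [mul_assoc]
    _ = c * e * sinv c := by rw [InverseSemigroup.mul_sinv_mul, mul_assoc]

lemma idem_conj' {e : S} (he : idem e) (c : S) : idem (sinv c * e * c) := by
  unfold idem at *
  calc sinv c * e * c * (sinv c * e * c)
      = sinv c * (e * (c * sinv c) * e) * c := by simp [mul_assoc]
    _ = sinv c * ((c * sinv c) * (e * e)) * c := by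
        rw [InverseSemigroup.idem_comm e (c * sinv c) he (idem_mul_sinv c)]; simp [mul_assoc]
    _ = sinv c * (c * sinv c) * (e * c) := by rw [he]; simp [mul_assoc]
    _ = (sinv c * c * sinv c) * (e * c) := by simp [mul_assoc]
    _ = sinv c * e * c := by rw [InverseSemigroup.sinv_mul_sinv, mul_assoc]

lemma nle_of_left {e a b : S} (he : idem e) (h : a = e * b) : nle a b := by
  refine ⟨sinv b * e * b, idem_conj' he b, ?_⟩
  have hcomm : e * (b * sinv b) = (b * sinv b) * e :=
    InverseSemigroup.idem_comm e (b * sinv b) he (idem_mul_sinv b)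
  calc a = e * b := h
    _ = (e * (b * sinv b)) * b := by rw [mul_assoc, InverseSemigroup.mul_sinv_mul]
    _ = ((b * sinv b) * e) * b := by rw [hcomm]
    _ = b * (sinv b * e * b) := by simp [mul_assoc]

lemma nle_left_of {a b : S} (h : nle a b) : ∃ e : S, idem e ∧ a = e * b := by
  obtain ⟨e, he, rfl⟩ := h
  refine ⟨b * e * sinv b, idem_conj he b, ?_⟩
  have hcomm : e * (sinv b * b) = (sinv b * b) * e :=
    InverseSemigroup.idem_comm e (sinv b * b) he (idem_sinv_mul b)
  calc b * e = b * ((sinv b * b) * e) := by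
        rw [← mul_assoc, ← mul_assoc, InverseSemigroup.mul_sinv_mul]
    _ = b * (e * (sinv b * b)) := by rw [hcomm]
    _ = b * e * sinv b * b := by simp [mul_assoc]

lemma nle_mul_left {a b : S} (c : S) (h : nle a b) : nle (c * a) (c * b) := by
  obtain ⟨e, he, rfl⟩ := h
  exact ⟨e, he, by rw [mul_assoc]⟩

lemma nle_mul_right {a b : S} (c : S) (h : nle a b) : nle (a * c) (b * c) := by
  obtain ⟨e, he, rfl⟩ := nle_left_of h
  exact nle_of_left he (by rw [mul_assoc])

lemma geninv_unique {a x y : S} (hx1 : a * x * a = a) (hx2 : x * a * x = x)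
    (hy1 : a * y * a = a) (hy2 : y * a * y = y) : x = y := by
  have hax : idem (a * x) := by
    unfold idem; calc a * x * (a * x) = (a * x * a) * x := by simp [mul_assoc]
      _ = a * x := by rw [hx1]
  have hay : idem (a * y) := by
    unfold idem; calc a * y * (a * y) = (a * y * a) * y := by simp [mul_assoc]
      _ = a * y := by rw [hy1]
  have hxa : idem (x * a) := by
    unfold idem; calc x * a * (x * a) = (x * a * x) * a := by simp [mul_assoc]
      _ = x * a := by rw [hx2]
  have hya : idem (y * a) := by
    unfold idem; calc y * a * (y * a) = (y * a * y) * a := by simp [mul_assoc]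
      _ = y * a := by rw [hy2]
  have h1 : x = x * a * y := by
    calc x = x * a * x := hx2.symm
      _ = x * ((a * y * a) * x) := by rw [hy1]; simp [mul_assoc]
      _ = x * ((a * y) * (a * x)) := by simp [mul_assoc]
      _ = x * ((a * x) * (a * y)) := by rw [InverseSemigroup.idem_comm _ _ hax hay]
      _ = (x * a * x) * (a * y) := by simp [mul_assoc]
      _ = x * a * y := by rw [hx2, mul_assoc]
  have h2 : y = x * a * y := by
    calc y = y * a * y := hy2.symm
      _ = y * (a * x * a) * y := by rw [hx1]
      _ = ((y * a) * (x * a)) * y := by simp [mul_assoc]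
      _ = ((x * a) * (y * a)) * y := by rw [InverseSemigroup.idem_comm _ _ hxa hya]
      _ = (x * a) * (y * a * y) := by simp [mul_assoc]
      _ = x * a * y := by rw [hy2]
  rw [h1, ← h2]

lemma sinv_mul_idem {b e : S} (he : idem e) : sinv (b * e) = e * sinv b := by
  have hcomm : e * (sinv b * b) = (sinv b * b) * e :=
    InverseSemigroup.idem_comm e (sinv b * b) he (idem_sinv_mul b)
  refine geninv_unique (a := b * e)
    (InverseSemigroup.mul_sinv_mul _) (InverseSemigroup.sinv_mul_sinv _) ?_ ?_
  · calc b * e * (e * sinv b) * (b * e)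
        = b * ((e * e) * (sinv b * b)) * e := by simp [mul_assoc]
      _ = b * (e * (sinv b * b)) * e := by rw [he]
      _ = b * ((sinv b * b) * e) * e := by rw [hcomm]
      _ = (b * sinv b * b) * (e * e) := by simp [mul_assoc]
      _ = b * e := by rw [InverseSemigroup.mul_sinv_mul, he]
  · calc e * sinv b * (b * e) * (e * sinv b)
        = e * ((sinv b * b) * e) * (e * sinv b) := by simp [mul_assoc]
      _ = e * (e * (sinv b * b)) * (e * sinv b) := by rw [hcomm]
      _ = (e * e) * ((sinv b * b) * e) * sinv b := by simp [mul_assoc]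
      _ = (e * e) * (e * (sinv b * b)) * sinv b := by rw [hcomm]
      _ = ((e * e) * e) * (sinv b * b * sinv b) := by simp [mul_assoc]
      _ = e * sinv b := by rw [he, he, InverseSemigroup.sinv_mul_sinv]

lemma compatible_of_bound {s t c : S} (hs : nle s c) (ht : nle t c) : compatible s t := by
  obtain ⟨e, he, rfl⟩ := hs
  obtain ⟨f, hf, rfl⟩ := ht
  constructor
  · have : sinv (c * e) * (c * f) = (e * (sinv c * c)) * f := by
      rw [sinv_mul_idem he]; simp [mul_assoc]
    rw [this]
    exact idem_mul (idem_mul he (idem_sinv_mul c)) hf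
  · have : (c * e) * sinv (c * f) = c * (e * f) * sinv c := by
      rw [sinv_mul_idem hf]; simp [mul_assoc]
    rw [this]
    exact idem_conj (idem_mul he hf) c

lemma nle_of_idem_right {b e : S} (he : idem e) : nle (b * e) b := ⟨e, he, rfl⟩

lemma isJoinSet_singleton (a : S) : isJoinSet ({a} : Set S) a := by
  constructor
  · intro x hx; rw [Set.mem_singleton_iff] at hx; rw [hx]; exact nle_refl a
  · intro c hc; exact hc a rfl

end Aux


section DAux
variable [DistributiveInverseSemigroup S]

lemma existsFinJoin (c : S) : ∀ Y : Finset S, Y.Nonempty → (∀ y ∈ Y, nle y c) →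
    ∃ j : S, isJoinSet (↑Y : Set S) j ∧ nle j c := by
  intro Y hne
  induction hne using Finset.Nonempty.cons_induction with
  | singleton a =>
    intro hbd
    exact ⟨a, by rw [Finset.coe_singleton]; exact isJoinSet_singleton a,
      hbd a (Finset.mem_singleton_self a)⟩
  | cons a s h hs ih =>
    intro hbd
    obtain ⟨j', hj', hj'c⟩ := ih (fun y hy => hbd y (Finset.mem_cons_of_mem hy))
    have hac : nle a c := hbd a (Finset.mem_cons_self a s)
    obtain ⟨j, hj⟩ := DistributiveInverseSemigroup.joins_exist a j'
      (compatible_of_bound hac hj'c)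
    refine ⟨j, ⟨?_, ?_⟩, hj.2.2 c hac hj'c⟩
    · intro x hx
      rcases Finset.mem_cons.mp (Finset.mem_coe.mp hx) with rfl | hx'
      · exact hj.1
      · exact nle_trans (hj'.1 x (Finset.mem_coe.mpr hx')) hj.2.1
    · intro d hd
      refine hj.2.2 d (hd a (Finset.mem_coe.mpr (Finset.mem_cons_self a s))) ?_
      exact hj'.2 d (fun y hy => hd y
        (Finset.mem_coe.mpr (Finset.mem_cons_of_mem (Finset.mem_coe.mp hy))))

lemma distribR (c : S) : ∀ Y : Finset S, Y.Nonempty → ∀ j : S, isJoinSet (↑Y : Set S) j →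
    isJoinSet ((· * c) '' (↑Y : Set S)) (j * c) := by
  intro Y hne
  induction hne using Finset.Nonempty.cons_induction with
  | singleton a =>
    intro j hj
    have hja : j = a := by
      refine nle_antisymm (hj.2 a ?_) (hj.1 a (Finset.mem_coe.mpr (Finset.mem_singleton_self a)))
      intro x hx
      rcases Finset.mem_singleton.mp (Finset.mem_coe.mp hx) with rfl
      exact nle_refl x
    subst hja
    rw [Finset.coe_singleton, Set.image_singleton]
    exact isJoinSet_singleton (j * c)
  | cons a s h hs ih =>
    intro j hj
    have hbd : ∀ y ∈ Finset.cons a s h, nle y j := fun y hy => hj.1 y (Finset.mem_coe.mpr hy)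
    obtain ⟨j', hj's, hj'j⟩ := existsFinJoin j s hs
      (fun y hy => hbd y (Finset.mem_cons_of_mem hy))
    have haj : nle a j := hbd a (Finset.mem_cons_self a s)
    have hjoin : isJoin a j' j := by
      refine ⟨haj, hj'j, fun d had hj'd => hj.2 d ?_⟩
      intro x hx
      rcases Finset.mem_cons.mp (Finset.mem_coe.mp hx) with rfl | hx'
      · exact had
      · exact nle_trans (hj's.1 x (Finset.mem_coe.mpr hx')) hj'd
    have hdist := DistributiveInverseSemigroup.mul_distrib_right a j' j c
      (compatible_of_bound haj hj'j) hjoin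
    have ihs := ih j' hj's
    constructor
    · rintro x ⟨y, hy, rfl⟩
      rcases Finset.mem_cons.mp (Finset.mem_coe.mp hy) with rfl | hy'
      · exact hdist.1
      · exact nle_trans (ihs.1 (y * c) ⟨y, Finset.mem_coe.mpr hy', rfl⟩) hdist.2.1
    · intro d hd
      refine hdist.2.2 d
        (hd (a * c) ⟨a, Finset.mem_coe.mpr (Finset.mem_cons_self a s), rfl⟩) ?_
      refine ihs.2 d ?_
      rintro x ⟨y, hy, rfl⟩
      exact hd (y * c)
        ⟨y, Finset.mem_coe.mpr (Finset.mem_cons_of_mem (Finset.mem_coe.mp hy)), rfl⟩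

lemma distribL (c : S) : ∀ Y : Finset S, Y.Nonempty → ∀ j : S, isJoinSet (↑Y : Set S) j →
    isJoinSet ((c * ·) '' (↑Y : Set S)) (c * j) := by
  intro Y hne
  induction hne using Finset.Nonempty.cons_induction with
  | singleton a =>
    intro j hj
    have hja : j = a := by
      refine nle_antisymm (hj.2 a ?_) (hj.1 a (Finset.mem_coe.mpr (Finset.mem_singleton_self a)))
      intro x hx
      rcases Finset.mem_singleton.mp (Finset.mem_coe.mp hx) with rfl
      exact nle_refl x
    subst hja
    rw [Finset.coe_singleton, Set.image_singleton]
    exact isJoinSet_singleton (c * j)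
  | cons a s h hs ih =>
    intro j hj
    have hbd : ∀ y ∈ Finset.cons a s h, nle y j := fun y hy => hj.1 y (Finset.mem_coe.mpr hy)
    obtain ⟨j', hj's, hj'j⟩ := existsFinJoin j s hs
      (fun y hy => hbd y (Finset.mem_cons_of_mem hy))
    have haj : nle a j := hbd a (Finset.mem_cons_self a s)
    have hjoin : isJoin a j' j := by
      refine ⟨haj, hj'j, fun d had hj'd => hj.2 d ?_⟩
      intro x hx
      rcases Finset.mem_cons.mp (Finset.mem_coe.mp hx) with rfl | hx'
      · exact had
      · exact nle_trans (hj's.1 x (Finset.mem_coe.mpr hx')) hj'd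
    have hdist := DistributiveInverseSemigroup.mul_distrib_left a j' j c
      (compatible_of_bound haj hj'j) hjoin
    have ihs := ih j' hj's
    constructor
    · rintro x ⟨y, hy, rfl⟩
      rcases Finset.mem_cons.mp (Finset.mem_coe.mp hy) with rfl | hy'
      · exact hdist.1
      · exact nle_trans (ihs.1 (c * y) ⟨y, Finset.mem_coe.mpr hy', rfl⟩) hdist.2.1
    · intro d hd
      refine hdist.2.2 d
        (hd (c * a) ⟨a, Finset.mem_coe.mpr (Finset.mem_cons_self a s), rfl⟩) ?_
      refine ihs.2 d ?_
      rintro x ⟨y, hy, rfl⟩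
      exact hd (c * y)
        ⟨y, Finset.mem_coe.mpr (Finset.mem_cons_of_mem (Finset.mem_coe.mp hy)), rfl⟩

end DAux


section VAux
variable [DistributiveInverseSemigroup S]

lemma mem_veeClosure_self {A : Set S} {x : S} (hx : x ∈ A) : x ∈ veeClosure A := by
  refine ⟨{x}, Finset.singleton_nonempty x, ?_, ?_, ?_⟩
  · rw [Finset.coe_singleton]; exact Set.singleton_subset_iff.mpr hx
  · intro u hu v hv
    rw [Finset.mem_singleton.mp hu, Finset.mem_singleton.mp hv]
    exact compatible_of_bound (nle_refl x) (nle_refl x)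
  · rw [Finset.coe_singleton]; exact isJoinSet_singleton x

lemma veeClosure_isOrderIdeal {A : Set S} (hA : IsOrderIdeal A) :
    IsOrderIdeal (veeClosure A) := by
  classical
  rintro x ⟨Y, hne, hsub, _, hjoin⟩ z hz
  obtain ⟨e, he, rfl⟩ := hz
  have hjs : isJoinSet (↑(Y.image (· * e)) : Set S) (x * e) := by
    rw [Finset.coe_image]
    exact distribR e Y hne x hjoin
  refine ⟨Y.image (· * e), hne.image _, ?_, ?_, hjs⟩
  · intro w hw
    obtain ⟨y, hy, rfl⟩ := Finset.mem_image.mp (Finset.mem_coe.mp hw)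
    exact hA y (hsub (Finset.mem_coe.mpr hy)) _ (nle_of_idem_right he)
  · intro u hu v hv
    exact compatible_of_bound (hjs.1 u (Finset.mem_coe.mpr hu)) (hjs.1 v (Finset.mem_coe.mpr hv))

lemma veeClosure_isVeeClosed (A : Set S) : IsVeeClosed (veeClosure A) := by
  intro Z hZne hZsub _ j hjoin
  classical
  have hx : ∀ x ∈ Z, ∃ Y : Finset S, Y.Nonempty ∧ (↑Y : Set S) ⊆ A ∧
      (∀ a ∈ Y, ∀ b ∈ Y, compatible a b) ∧ isJoinSet (↑Y : Set S) x :=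
    fun x hxZ => hZsub (Finset.mem_coe.mpr hxZ)
  choose g hg1 hg2 _ hg4 using hx
  refine ⟨Z.attach.biUnion (fun x => g x.1 x.2), ?_, ?_, ?_, ?_⟩
  · obtain ⟨x, hxZ⟩ := hZne
    obtain ⟨w, hw⟩ := hg1 x hxZ
    exact ⟨w, Finset.mem_biUnion.mpr ⟨⟨x, hxZ⟩, Finset.mem_attach _ _, hw⟩⟩
  · intro w hw
    obtain ⟨x, _, hwx⟩ := Finset.mem_biUnion.mp (Finset.mem_coe.mp hw)
    exact hg2 x.1 x.2 (Finset.mem_coe.mpr hwx)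
  · have hub : ∀ w ∈ Z.attach.biUnion (fun x => g x.1 x.2), nle w j := by
      intro w hw
      obtain ⟨x, _, hwx⟩ := Finset.mem_biUnion.mp hw
      exact nle_trans ((hg4 x.1 x.2).1 w (Finset.mem_coe.mpr hwx))
        (hjoin.1 x.1 (Finset.mem_coe.mpr x.2))
    exact fun u hu v hv => compatible_of_bound (hub u hu) (hub v hv)
  · constructor
    · intro w hw
      obtain ⟨x, _, hwx⟩ := Finset.mem_biUnion.mp (Finset.mem_coe.mp hw)
      exact nle_trans ((hg4 x.1 x.2).1 w (Finset.mem_coe.mpr hwx))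
        (hjoin.1 x.1 (Finset.mem_coe.mpr x.2))
    · intro c hc
      refine hjoin.2 c ?_
      intro x hxZ
      have hxZ' := Finset.mem_coe.mp hxZ
      refine (hg4 x hxZ').2 c ?_
      intro w hw
      refine hc w (Finset.mem_coe.mpr (Finset.mem_biUnion.mpr
        ⟨⟨x, hxZ'⟩, Finset.mem_attach _ _, Finset.mem_coe.mp hw⟩))

lemma mul_sinv_cancel_of_nle {z f : S} (hz : nle z f) : f * (sinv f * z) = z := by
  obtain ⟨e, he, rfl⟩ := hz
  calc f * (sinv f * (f * e)) = (f * sinv f * f) * e := by simp [mul_assoc]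
    _ = f * e := by rw [InverseSemigroup.mul_sinv_mul]

lemma t_le_right {y z f : S} (hy : nle y f) (hz : nle z f) : nle (y * (sinv f * z)) z := by
  have h := nle_mul_right (sinv f * z) hy
  rwa [mul_sinv_cancel_of_nle hz] at h

lemma t_le_left {z f : S} (hz : nle z f) (y : S) : nle (y * (sinv f * z)) y := by
  obtain ⟨e, he, rfl⟩ := hz
  have h : sinv f * (f * e) = (sinv f * f) * e := by rw [mul_assoc]
  rw [h]
  exact nle_of_idem_right (idem_mul (idem_sinv_mul f) he)

end VAux

/-- If `P` is a ∨-closed order ideal maximal among ∨-closed order ideals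
disjoint from the filter `F`, then `P` is a prime order ideal. -/
theorem stmt11 {S : Type*} [DistributiveInverseSemigroup S] (F P : Set S)
    (hF : IsFilter F)
    (hPideal : IsOrderIdeal P) (hPvee : IsVeeClosed P) (hPdisj : P ∩ F = ∅)
    (hmax : ∀ Q : Set S, IsOrderIdeal Q → IsVeeClosed Q → Q ∩ F = ∅ → P ⊆ Q → Q = P) :
    IsPrimeOrderIdeal P := by
  intro a b hab
  by_contra hcon
  push_neg at hcon
  obtain ⟨ha, hb⟩ := hcon
  have step : ∀ x : S, x ∉ P → ∃ (fx : S) (Y : Finset S), fx ∈ F ∧ Y.Nonempty ∧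
      (↑Y : Set S) ⊆ P ∪ {w | nle w x} ∧ isJoinSet (↑Y : Set S) fx := by
    intro x hx
    have hUideal : IsOrderIdeal (P ∪ {w | nle w x}) := by
      intro u hu v hv
      rcases hu with hu | hu
      · exact Or.inl (hPideal u hu v hv)
      · exact Or.inr (nle_trans hv hu)
    have hQideal : IsOrderIdeal (veeClosure (P ∪ {w | nle w x})) :=
      veeClosure_isOrderIdeal hUideal
    have hQvee := veeClosure_isVeeClosed (P ∪ {w | nle w x})
    have hPQ : P ⊆ veeClosure (P ∪ {w | nle w x}) :=
      fun p hp => mem_veeClosure_self (Or.inl hp)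
    have hxQ : x ∈ veeClosure (P ∪ {w | nle w x}) :=
      mem_veeClosure_self (Or.inr (nle_refl x))
    have hQF : veeClosure (P ∪ {w | nle w x}) ∩ F ≠ ∅ := by
      intro hdisj
      have heq := hmax _ hQideal hQvee hdisj hPQ
      exact hx (heq ▸ hxQ)
    obtain ⟨fx, hfxQ, hfxF⟩ := Set.nonempty_iff_ne_empty.mpr hQF
    obtain ⟨Y, hne, hsub, _, hjoin⟩ := hfxQ
    exact ⟨fx, Y, hfxF, hne, hsub, hjoin⟩
  obtain ⟨fa, Ya, hfaF, hYane, hYasub, hYajoin⟩ := step a ha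
  obtain ⟨fb, Yb, hfbF, hYbne, hYbsub, hYbjoin⟩ := step b hb
  obtain ⟨f, hfF, hffa, hffb⟩ := hF.2.1 fa hfaF fb hfbF
  have step2 : ∀ (x fx : S) (Y : Finset S), nle f fx → (↑Y : Set S) ⊆ P ∪ {w | nle w x} →
      Y.Nonempty → isJoinSet (↑Y : Set S) fx → ∃ A : Finset S, A.Nonempty ∧
      (↑A : Set S) ⊆ P ∪ {w | nle w x} ∧ isJoinSet (↑A : Set S) f := by
    intro x fx Y hle hsub hne hjoin
    classical
    obtain ⟨e, he, hfe⟩ := hle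
    refine ⟨Y.image (· * e), hne.image _, ?_, ?_⟩
    · intro w hw
      obtain ⟨y, hy, rfl⟩ := Finset.mem_image.mp (Finset.mem_coe.mp hw)
      rcases hsub (Finset.mem_coe.mpr hy) with h | h
      · exact Or.inl (hPideal y h _ (nle_of_idem_right he))
      · exact Or.inr (nle_trans (nle_of_idem_right he) h)
    · rw [Finset.coe_image, hfe]
      exact distribR e Y hne fx hjoin
  obtain ⟨A, hAne, hAsub, hAjoin⟩ := step2 a fa Ya hffa hYasub hYane hYajoin
  obtain ⟨B, hBne, hBsub, hBjoin⟩ := step2 b fb Yb hffb hYbsub hYbne hYbjoin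
  classical
  set T : Finset S := (A ×ˢ B).image (fun p => p.1 * (InverseSemigroup.sinv f * p.2)) with hT
  have hmemT : ∀ t ∈ T, ∃ y ∈ A, ∃ z ∈ B, t = y * (InverseSemigroup.sinv f * z) := by
    intro t ht
    obtain ⟨p, hp, rfl⟩ := Finset.mem_image.mp ht
    obtain ⟨h1, h2⟩ := Finset.mem_product.mp hp
    exact ⟨p.1, h1, p.2, h2, rfl⟩
  have hyf : ∀ y ∈ A, nle y f := fun y hy => hAjoin.1 y (Finset.mem_coe.mpr hy)
  have hzf : ∀ z ∈ B, nle z f := fun z hz => hBjoin.1 z (Finset.mem_coe.mpr hz)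
  have hTle : ∀ t ∈ T, nle t f := by
    intro t ht
    obtain ⟨y, hy, z, hz, rfl⟩ := hmemT t ht
    exact nle_trans (t_le_right (hyf y hy) (hzf z hz)) (hzf z hz)
  have hTne : T.Nonempty := by
    obtain ⟨y, hy⟩ := hAne
    obtain ⟨z, hz⟩ := hBne
    exact ⟨_, Finset.mem_image.mpr ⟨(y, z), Finset.mem_product.mpr ⟨hy, hz⟩, rfl⟩⟩
  have hTsub : (↑T : Set S) ⊆ P := by
    intro t ht
    obtain ⟨y, hy, z, hz, rfl⟩ := hmemT t (Finset.mem_coe.mp ht)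
    rcases hAsub (Finset.mem_coe.mpr hy) with hyP | hya
    · exact hPideal y hyP _ (t_le_left (hzf z hz) y)
    · rcases hBsub (Finset.mem_coe.mpr hz) with hzP | hzb
      · exact hPideal z hzP _ (t_le_right (hyf y hy) (hzf z hz))
      · exact hab _ (nle_trans (t_le_left (hzf z hz) y) hya)
          (nle_trans (t_le_right (hyf y hy) (hzf z hz)) hzb)
  have hTjoin : isJoinSet (↑T : Set S) f := by
    constructor
    · intro t ht
      exact hTle t (Finset.mem_coe.mp ht)
    · intro c hc
      refine hBjoin.2 c ?_
      intro z hz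
      have hz' := Finset.mem_coe.mp hz
      have hdist := distribR (InverseSemigroup.sinv f * z) A hAne f hAjoin
      rw [mul_sinv_cancel_of_nle (hzf z hz')] at hdist
      refine hdist.2 c ?_
      rintro w ⟨y, hy, rfl⟩
      exact hc (y * (InverseSemigroup.sinv f * z)) (Finset.mem_coe.mpr (Finset.mem_image.mpr
        ⟨(y, z), Finset.mem_product.mpr ⟨Finset.mem_coe.mp hy, hz'⟩, rfl⟩))
  have hfP : f ∈ P := hPvee T hTne hTsub
    (fun u hu v hv => compatible_of_bound (hTle u hu) (hTle v hv)) f hTjoin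
  exact Set.eq_empty_iff_forall_notMem.mp hPdisj f ⟨hfP, hfF⟩


end InvPaper
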